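/- For the cylinder eigenfunctions u_{m,n}(x,θ) = sqrt(2/(ab)) sin(mπx/a) e^{inπθ/b} on [0,a] × (ℝ/bℤ), the squared L² norm of the normal derivative over the boundary (the two circles x = 0 and x = a) equals (4/a)(mπ/a)², and hence is at most (4/a)λ where λ = (mπ/a)² + (nπ/b)²; moreover for fixed m, the ratio of this quantity to λ tends to 0 as n → ∞. -/

import Mathlib

open Real Filter

/-- The cylinder eigenfunction `u(x,θ) = √(2/(ab)) sin(mπx/a) e^{inπθ/b}`. -/
noncomputable def cylEigen (a b : ℝ) (m : ℕ) (n : ℤ) (x θ : ℝ) : ℂ :=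
  (Real.sqrt (2 / (a * b)) * Real.sin (m * π * x / a) : ℝ) *
    Complex.exp (Complex.I * n * π * θ / b)

/-- Squared `L²` norm of the normal derivative over the two boundary circles. -/
noncomputable def cylBdryNorm (a b : ℝ) (m : ℕ) (n : ℤ) : ℝ :=
  ∫ θ in (0:ℝ)..b,
    ‖deriv (fun x => cylEigen a b m n x θ) 0‖ ^ 2
      + ‖deriv (fun x => cylEigen a b m n x θ) a‖ ^ 2

/-! The angular factor has modulus one, so `|∂ₓu|²` does not depend on `θ`, and at both ends
`x = 0` and `x = a` it equals `(2/(ab)) (mπ/a)²` because `cos² (mπ) = 1`. Integrating over a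
circle of length `b` on each end gives `(4/a)(mπ/a)²`, which no longer depends on `n`, whereas
`λ` grows like `n²`. -/

lemma norm_exp_I_mul_int_mul_pi_div (n : ℤ) (θ b : ℝ) :
    ‖Complex.exp (Complex.I * n * π * θ / b)‖ = 1 := by
  have h : Complex.I * n * π * θ / b = Complex.I * ((n * π * θ / b : ℝ) : ℂ) := by
    push_cast
    ring
  rw [h, Complex.norm_exp_I_mul_ofReal]

lemma hasDerivAt_cylEigen (a b : ℝ) (m : ℕ) (n : ℤ) (θ x : ℝ) :
    HasDerivAt (fun x => cylEigen a b m n x θ)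
      ((Real.sqrt (2 / (a * b)) * (Real.cos (m * π * x / a) * (m * π / a)) : ℝ) *
        Complex.exp (Complex.I * n * π * θ / b)) x := by
  have hlin : HasDerivAt (fun x : ℝ => m * π * x / a) (m * π / a) x := by
    simpa using ((hasDerivAt_id x).const_mul ((m : ℝ) * π)).div_const a
  exact ((((Real.hasDerivAt_sin _).comp x hlin).const_mul _).ofReal_comp).mul_const _

lemma norm_deriv_cylEigen_sq (a b : ℝ) (hab : 0 ≤ a * b) (m : ℕ) (n : ℤ) (θ x : ℝ) :
    ‖deriv (fun x => cylEigen a b m n x θ) x‖ ^ 2 =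
      2 / (a * b) * (m * π / a) ^ 2 * Real.cos (m * π * x / a) ^ 2 := by
  rw [(hasDerivAt_cylEigen a b m n θ x).deriv, norm_mul, norm_exp_I_mul_int_mul_pi_div,
    mul_one, Complex.norm_real, Real.norm_eq_abs, sq_abs, mul_pow, mul_pow,
    Real.sq_sqrt (by positivity)]
  ring

lemma cos_sq_nat_mul_pi (m : ℕ) : Real.cos (m * π) ^ 2 = 1 := by
  rw [Real.cos_nat_mul_pi, ← pow_mul, mul_comm, pow_mul, neg_one_sq, one_pow]

lemma cylBdryNorm_eq (a b : ℝ) (ha : 0 < a) (hb : 0 < b) (m : ℕ) (n : ℤ) :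
    cylBdryNorm a b m n = 4 / a * (m * π / a) ^ 2 := by
  have hend : Real.cos (m * π * a / a) ^ 2 = 1 := by
    rw [mul_div_cancel_right₀ _ ha.ne', cos_sq_nat_mul_pi]
  have hconst : ∀ θ : ℝ,
      ‖deriv (fun x => cylEigen a b m n x θ) 0‖ ^ 2
        + ‖deriv (fun x => cylEigen a b m n x θ) a‖ ^ 2
      = 2 * (2 / (a * b) * (m * π / a) ^ 2) := fun θ => by
    rw [norm_deriv_cylEigen_sq a b (by positivity), norm_deriv_cylEigen_sq a b (by positivity),
      hend, mul_zero, zero_div, Real.cos_zero]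
    ring
  rw [cylBdryNorm, intervalIntegral.integral_congr (fun θ _ => hconst θ),
    intervalIntegral.integral_const, smul_eq_mul]
  field_simp
  ring

lemma tendsto_const_add_natCast_mul_div_sq_atTop (c : ℝ) {b : ℝ} (hb : 0 < b) :
    Tendsto (fun n : ℕ => c + (n * π / b) ^ 2) atTop atTop := by
  refine tendsto_atTop_add_const_left _ c ?_
  have hlin : Tendsto (fun n : ℕ => (n : ℝ) * (π / b)) atTop atTop :=
    tendsto_natCast_atTop_atTop.atTop_mul_const (div_pos pi_pos hb)
  simpa only [mul_div_assoc, Function.comp_def] using (tendsto_pow_atTop two_ne_zero).comp hlin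

theorem cylinder_boundary_norm_general (a b : ℝ) (ha : 0 < a) (hb : 0 < b)
    (m : ℕ) :
    (∀ n : ℤ, cylBdryNorm a b m n = 4 / a * (m * π / a) ^ 2) ∧
    (∀ n : ℤ, cylBdryNorm a b m n ≤ 4 / a * ((m * π / a) ^ 2 + (n * π / b) ^ 2)) ∧
    Tendsto (fun n : ℕ =>
        cylBdryNorm a b m n / ((m * π / a) ^ 2 + ((n : ℝ) * π / b) ^ 2))
      atTop (nhds 0) := by
  have hnorm := cylBdryNorm_eq a b ha hb m
  refine ⟨hnorm, fun n => ?_, ?_⟩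
  · rw [hnorm n]
    gcongr
    exact le_add_of_nonneg_right (sq_nonneg _)
  · simp only [hnorm]
    exact tendsto_const_nhds.div_atTop (tendsto_const_add_natCast_mul_div_sq_atTop _ hb)

theorem cylinder_boundary_norm (a b : ℝ) (ha : 0 < a) (hb : 0 < b)
    (m : ℕ) (hm : 0 < m) :
    (∀ n : ℤ, cylBdryNorm a b m n = 4 / a * (m * π / a) ^ 2) ∧
    (∀ n : ℤ, cylBdryNorm a b m n ≤ 4 / a * ((m * π / a) ^ 2 + (n * π / b) ^ 2)) ∧
    Tendsto (fun n : ℕ =>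
        cylBdryNorm a b m n / ((m * π / a) ^ 2 + ((n : ℝ) * π / b) ^ 2))
      atTop (nhds 0) :=
  cylinder_boundary_norm_general a b ha hb m
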